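/- arXiv:1810.02732 — 4 statements merged into one kernel-verified Lean document; each statement's English description precedes it below -/
import Mathlib

section
/- (Dumont–Ramamonjisoa) For every integer n ≥ 1, D_G^{n−1}(A·S) = ∑_{k=0}^{n−1} Q_{n,k}(0) · A^{n+k} · S^{n}, as an identity in the polynomial ring ℚ[A,S], where Q_{n,k}(0) ∈ ℚ denotes the evaluation of the polynomial Q_{n,k} at 0. -/
open Polynomial
/-- The Ramanujan–Shor polynomials `Q n k ∈ ℚ[x]`. -/
noncomputable def ramanujanShorQ : ℕ → ℤ → Polynomial ℚ
  | 0, _ => 0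
  | 1, k => if k = 0 then 1 else 0
  | (n + 2), k =>
      if 0 ≤ k ∧ k ≤ (n : ℤ) + 1 then
        (Polynomial.X + Polynomial.C ((n : ℚ) + 1)) * ramanujanShorQ (n + 1) k
          + Polynomial.C (((n : ℤ) + k : ℤ) : ℚ) * ramanujanShorQ (n + 1) (k - 1)
      else 0

/-! `D` sends `x ^ a * y ^ b` to `a x ^ (a + 2) y ^ (b + 1) + b x ^ (a + 1) y ^ (b + 1)`, so in
`D (∑ₖ cₙₖ x ^ (n + k) y ^ n)` the coefficient of `x ^ (n + 1 + k) y ^ (n + 1)` is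
`n cₙₖ + (n + k - 1) cₙ,ₖ₋₁`. This is Shor's recurrence at `x = 0`. -/

theorem ramanujanShorQ_eq_zero_of_neg_or_le (n : ℕ) {k : ℤ} (hk : k < 0 ∨ (n : ℤ) ≤ k) :
    ramanujanShorQ n k = 0 := by
  match n with
  | 0 => rfl
  | 1 => rw [ramanujanShorQ, if_neg (by omega)]
  | n + 2 => rw [ramanujanShorQ, if_neg (by push_cast at hk; omega)]

theorem ramanujanShorQ_succ_succ (n : ℕ) (k : ℤ) :
    ramanujanShorQ (n + 2) k = (X + C ((n : ℚ) + 1)) * ramanujanShorQ (n + 1) k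
      + C ((n : ℚ) + k) * ramanujanShorQ (n + 1) (k - 1) := by
  rw [ramanujanShorQ]
  split_ifs with hk
  · push_cast; rfl
  · rw [ramanujanShorQ_eq_zero_of_neg_or_le _ (by omega),
      ramanujanShorQ_eq_zero_of_neg_or_le _ (by omega)]
    ring

theorem eval_zero_ramanujanShorQ_succ_succ (n : ℕ) (k : ℤ) :
    (ramanujanShorQ (n + 2) k).eval 0 = ((n : ℚ) + 1) * (ramanujanShorQ (n + 1) k).eval 0
      + ((n : ℚ) + k) * (ramanujanShorQ (n + 1) (k - 1)).eval 0 := by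
  simp [ramanujanShorQ_succ_succ]

namespace Derivation

variable {R A : Type*} [CommSemiring R] [CommSemiring A] [Algebra R A] (D : Derivation R A A)
  {x y : A}

theorem apply_pow_of_apply_eq_pow_mul {e : ℕ} {z : A} (h : D x = x ^ (e + 1) * z) (a : ℕ) :
    D (x ^ a) = a • (x ^ (a + e) * z) := by
  cases a with
  | zero => simp
  | succ a => rw [leibniz_pow, h, Nat.add_sub_cancel, smul_eq_mul]; ring

theorem apply_pow_mul_pow (hx : D x = x ^ 3 * y) (hy : D y = x * y ^ 2) (a b : ℕ) :
    D (x ^ a * y ^ b) = a • (x ^ (a + 2) * y ^ (b + 1)) + b • (x ^ (a + 1) * y ^ (b + 1)) := by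
  have hy' : D y = y ^ (1 + 1) * x := by rw [hy]; ring
  simp only [leibniz, D.apply_pow_of_apply_eq_pow_mul hx, D.apply_pow_of_apply_eq_pow_mul hy',
    smul_eq_mul, nsmul_eq_mul]
  ring

end Derivation

theorem Derivation.iterate_apply_mul_eq_sum_ramanujanShorQ {A : Type*} [CommRing A] [Algebra ℚ A]
    (D : Derivation ℚ A A) {x y : A} (hx : D x = x ^ 3 * y) (hy : D y = x * y ^ 2) (m : ℕ) :
    D^[m] (x * y) = ∑ k ∈ Finset.range (m + 1),
      (ramanujanShorQ (m + 1) k).eval 0 • (x ^ (m + 1 + k) * y ^ (m + 1)) := by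
  induction m with
  | zero => simp [ramanujanShorQ]
  | succ m ih =>
    have hQ_top : ramanujanShorQ (m + 1) (m + 1 : ℕ) = 0 :=
      ramanujanShorQ_eq_zero_of_neg_or_le _ (by omega)
    have hQ_bot : ramanujanShorQ (m + 1) (0 - 1 : ℤ) = 0 :=
      ramanujanShorQ_eq_zero_of_neg_or_le _ (by omega)
    rw [Function.iterate_succ_apply', ih, map_sum]
    simp_rw [eval_zero_ramanujanShorQ_succ_succ, add_smul, Finset.sum_add_distrib]
    rw [Finset.sum_range_succ _ (m + 1), Finset.sum_range_succ' _ (m + 1)]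
    simp only [hQ_top, Nat.cast_zero, hQ_bot, eval_zero, mul_zero, zero_smul, add_zero,
      ← Finset.sum_add_distrib]
    refine Finset.sum_congr rfl fun k _ => ?_
    rw [D.map_smul, D.apply_pow_mul_pow hx hy]
    push_cast
    rw [add_sub_cancel_right,
      show m + 1 + k + 2 = m + 1 + 1 + (k + 1) by omega, show m + 1 + k + 1 = m + 1 + 1 + k by omega]
    module

open MvPolynomial in
theorem dumont_ramamonjisoa
    (D : Derivation ℚ (MvPolynomial (Fin 2) ℚ) (MvPolynomial (Fin 2) ℚ))
    (hA : D (X 0) = (X 0) ^ 3 * X 1)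
    (hS : D (X 1) = X 0 * (X 1) ^ 2)
    (n : ℕ) (hn : 1 ≤ n) :
    (⇑D)^[n - 1] (X 0 * X 1)
      = ∑ k ∈ Finset.range n,
          MvPolynomial.C (Polynomial.eval 0 (ramanujanShorQ n (k : ℤ)))
            * (X 0) ^ (n + k) * (X 1) ^ n := by
  obtain ⟨m, rfl⟩ : ∃ m, n = m + 1 := ⟨n - 1, by omega⟩
  simp_rw [Nat.add_sub_cancel, D.iterate_apply_mul_eq_sum_ramanujanShorQ hA hS m,
    MvPolynomial.smul_eq_C_mul, mul_assoc]
end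

section
/- For every integer n ≥ 1, D^{n}(a) = a·x·y^{n}·w^{n−1} · ∑_{k=0}^{n−1} Q_{n,k}(x·w^{−1}) · y^{k}, as an identity in the field K, where Q_{n,k}(x·w^{−1}) denotes the evaluation of the polynomial Q_{n,k} at the element x·w^{−1} ∈ K. -/
/-!
The ratio `t = x / w` is a constant of `D`, and so is every `Q_{n,k}(t)`. Hence
`Dⁿ(a) = a x yⁿ wⁿ⁻¹ Sₙ(y)` with `Sₙ(Y) = ∑ₖ Q_{n,k}(t) Yᵏ` a polynomial with constant
coefficients, and the Leibniz rule turns `D` into `Sₙ ↦ (t + n + n Y) Sₙ + Y² Sₙ'`,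
which coefficientwise is Shor's recurrence.
-/

open Polynomial

/-- The images of the four variables `a, x, y, w` in the fraction field of `ℚ[a,x,y,w]`. -/
noncomputable def gv (i : Fin 4) : FractionRing (MvPolynomial (Fin 4) ℚ) :=
  algebraMap (MvPolynomial (Fin 4) ℚ) (FractionRing (MvPolynomial (Fin 4) ℚ)) (MvPolynomial.X i)

theorem ramanujanShorQ_of_neg (n : ℕ) {k : ℤ} (hk : k < 0) : ramanujanShorQ n k = 0 := by
  match n with
  | 0 => rfl
  | 1 => rw [ramanujanShorQ, if_neg (by omega)]
  | n + 2 => rw [ramanujanShorQ, if_neg (by omega)]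

theorem ramanujanShorQ_of_le (n : ℕ) {k : ℤ} (hk : (n : ℤ) ≤ k) : ramanujanShorQ n k = 0 := by
  match n with
  | 0 => rfl
  | 1 => rw [ramanujanShorQ, if_neg (by omega)]
  | n + 2 => rw [ramanujanShorQ, if_neg (by omega)]

/-- Shor's recurrence holds for every `k ∈ ℤ`, since both sides vanish outside `0 ≤ k ≤ m + 1`. -/
theorem ramanujanShorQ_add_two (m : ℕ) (k : ℤ) :
    ramanujanShorQ (m + 2) k = (X + C ((m : ℚ) + 1)) * ramanujanShorQ (m + 1) k
      + C (((m : ℤ) + k : ℤ) : ℚ) * ramanujanShorQ (m + 1) (k - 1) := by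
  rw [ramanujanShorQ]
  split_ifs with hk
  · rfl
  · rcases not_and_or.mp hk with hk | hk
    · rw [ramanujanShorQ_of_neg _ (by omega), ramanujanShorQ_of_neg _ (by omega)]; simp
    · rw [ramanujanShorQ_of_le _ (by push_cast; omega), ramanujanShorQ_of_le _ (by push_cast; omega)]
      simp

theorem Polynomial.coeff_X_mul_derivative {R : Type*} [Semiring R] (p : R[X]) (n : ℕ) :
    (X * derivative p).coeff n = p.coeff n * n := by
  rcases n with _ | n
  · simp
  · rw [coeff_X_mul, coeff_derivative, Nat.cast_succ]

section ShorPolynomial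

variable {K : Type*} [Field K] [Algebra ℚ K]

noncomputable def shorPoly (t : K) (n : ℕ) : K[X] :=
  ∑ k ∈ Finset.range n, C (aeval t (ramanujanShorQ n k)) * X ^ k

theorem coeff_shorPoly (t : K) (n k : ℕ) : (shorPoly t n).coeff k = aeval t (ramanujanShorQ n k) := by
  rw [shorPoly, finsetSum_coeff]
  simp only [coeff_C_mul_X_pow, Finset.sum_ite_eq, Finset.mem_range]
  split_ifs with hk
  · rfl
  · rw [ramanujanShorQ_of_le _ (by omega), map_zero]

theorem shorPoly_one (t : K) : shorPoly t 1 = 1 := by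
  simp [shorPoly, ramanujanShorQ]

theorem shorPoly_add_two (t : K) (m : ℕ) :
    shorPoly t (m + 2) = C (t + (m + 1)) * shorPoly t (m + 1)
      + C ((m : K) + 1) * (X * shorPoly t (m + 1)) + X * (X * derivative (shorPoly t (m + 1))) := by
  ext k
  rw [coeff_add, coeff_add, coeff_C_mul, coeff_C_mul, coeff_shorPoly, coeff_shorPoly,
    ramanujanShorQ_add_two]
  simp only [map_add, map_mul, aeval_X, map_natCast, map_intCast, map_one]
  rcases k with _ | k
  · simp [ramanujanShorQ_of_neg]
  · rw [coeff_X_mul, coeff_X_mul, coeff_X_mul_derivative, coeff_shorPoly]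
    simp only [Nat.cast_add, Nat.cast_one, add_sub_cancel_right, Int.cast_add, Int.cast_natCast]
    ring

end ShorPolynomial

theorem Derivation.map_eval_of_coeff {R A : Type*} [CommRing R] [CommRing A] [Algebra R A]
    (D : Derivation R A A) {p : A[X]} (hp : ∀ k, D (p.coeff k) = 0) (y : A) :
    D (p.eval y) = (derivative p).eval y * D y := by
  rw [eval_eq_sum, derivative_eval, Polynomial.sum_def, Polynomial.sum_def, map_sum, Finset.sum_mul]
  refine Finset.sum_congr rfl fun k _ => ?_
  rw [Derivation.leibniz, hp, Derivation.leibniz_pow]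
  simp only [smul_eq_mul, nsmul_eq_mul]
  ring

section Grammar

variable {K : Type*} [Field K] [Algebra ℚ K] (D : Derivation ℚ K K) {a x y w : K}

theorem map_x_mul_w_inv_eq_zero (hDx : D x = x * y * w) (hDw : D w = y * w ^ 2) (hw : w ≠ 0) :
    D (x * w⁻¹) = 0 := by
  rw [Derivation.leibniz, Derivation.leibniz_inv, hDx, hDw]
  simp only [smul_eq_mul]
  field_simp
  ring

theorem map_a_x_y_pow_w_pow (hDa : D a = a * x * y) (hDx : D x = x * y * w)
    (hDy : D y = y ^ 3 * w) (hDw : D w = y * w ^ 2) (hw : w ≠ 0) (m : ℕ) :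
    D (a * x * y ^ (m + 1) * w ^ m)
      = a * x * y ^ (m + 2) * w ^ (m + 1) * (x * w⁻¹ + (m + 1) + (m + 1) * y) := by
  simp only [Derivation.leibniz, Derivation.leibniz_pow, hDa, hDx, hDy, hDw, smul_eq_mul,
    nsmul_eq_mul]
  field_simp
  rcases m with _ | m <;> push_cast <;> ring

theorem iterate_map_a_eq_shorPoly (hDa : D a = a * x * y) (hDx : D x = x * y * w)
    (hDy : D y = y ^ 3 * w) (hDw : D w = y * w ^ 2) (hw : w ≠ 0) (m : ℕ) :
    D^[m + 1] a = a * x * y ^ (m + 1) * w ^ m * (shorPoly (x * w⁻¹) (m + 1)).eval y := by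
  have hconst : ∀ n k, D ((shorPoly (x * w⁻¹) n).coeff k) = 0 := fun n k => by
    rw [coeff_shorPoly, Derivation.map_aeval, map_x_mul_w_inv_eq_zero D hDx hDw hw, smul_zero]
  induction m with
  | zero => simp [shorPoly_one, hDa]
  | succ m ih =>
    rw [Function.iterate_succ_apply', ih, Derivation.leibniz, smul_eq_mul, smul_eq_mul,
      map_a_x_y_pow_w_pow D hDa hDx hDy hDw hw, D.map_eval_of_coeff (hconst _), hDy,
      shorPoly_add_two]
    simp only [eval_add, eval_mul, eval_C, eval_X]
    ring

end Grammar

theorem dn_a (D : Derivation ℚ (FractionRing (MvPolynomial (Fin 4) ℚ))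
      (FractionRing (MvPolynomial (Fin 4) ℚ)))
    (hDa : D (gv 0) = gv 0 * gv 1 * gv 2)
    (hDx : D (gv 1) = gv 1 * gv 2 * gv 3)
    (hDy : D (gv 2) = (gv 2) ^ 3 * gv 3)
    (hDw : D (gv 3) = gv 2 * (gv 3) ^ 2)
    (n : ℕ) (hn : 1 ≤ n) :
    (⇑D)^[n] (gv 0)
      = gv 0 * gv 1 * (gv 2) ^ n * (gv 3) ^ (n - 1)
        * ∑ k ∈ Finset.range n,
            Polynomial.aeval (gv 1 * (gv 3)⁻¹) (ramanujanShorQ n (k : ℤ)) * (gv 2) ^ k := by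
  obtain ⟨m, rfl⟩ : ∃ m, n = m + 1 := ⟨n - 1, by omega⟩
  have hw : gv 3 ≠ 0 := by simp [gv, MvPolynomial.X_ne_zero]
  rw [Nat.add_sub_cancel]
  /- The ℚ-module structure in the type of `D` is the localisation one, not `Algebra.toModule`;
  `D'` is the same map seen as a derivation for the latter. -/
  let f : FractionRing (MvPolynomial (Fin 4) ℚ) →+ _ := D.toLinearMap.toAddMonoidHom
  have hf : ∀ a b, f (a * b) = a • f b + b • f a := D.leibniz
  let _ : Module ℚ (FractionRing (MvPolynomial (Fin 4) ℚ)) := Algebra.toModule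
  let D' : Derivation ℚ _ _ := Derivation.mk' f.toRatLinearMap hf
  refine (iterate_map_a_eq_shorPoly D' hDa hDx hDy hDw hw m).trans ?_
  simp [shorPoly, eval_finsetSum]
end

section
/- For all integers n ≥ 1 and r ≥ 0, φ(D^{n}(a·x^{r}·y)) = X^{r}·(X+r+n)^{n}, as an identity in ℚ[X]. -/
noncomputable section PhiDnAux

/-- Scalar family `chat k τ a` (EGF `e^{-τt}(1-t)^{-a}`), defined by the
recursion `chat (k+1) τ a = a * chat k τ (a+1) - τ * chat k τ a`. -/
def chat : ℕ → Polynomial ℚ → Polynomial ℚ → Polynomial ℚ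
  | 0, _, _ => 1
  | k+1, τ, a => a * chat k τ (a+1) - τ * chat k τ a

lemma chat_zero (τ a : Polynomial ℚ) : chat 0 τ a = 1 := rfl

lemma chat_succ (k : ℕ) (τ a : Polynomial ℚ) :
    chat (k+1) τ a = a * chat k τ (a+1) - τ * chat k τ a := rfl

lemma chat_star (k : ℕ) (τ : Polynomial ℚ) :
    ∀ a, chat (k+1) τ (a+1) - chat (k+1) τ a
      = ((k : Polynomial ℚ) + 1) * chat k τ (a+1) := by
  induction k with
  | zero =>
      intro a
      simp only [chat_succ, chat_zero]
      ring
  | succ j ih =>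
      intro a
      have e1 := chat_succ (j+1) τ (a+1)
      have e2 := chat_succ (j+1) τ a
      have e3 := ih a
      have e4 := ih (a+1)
      have e5 := chat_succ j τ (a+1)
      push_cast
      linear_combination e1 - e2 + (a+1)*e4 - τ*e3 - ((j : Polynomial ℚ)+1)*e5

lemma chat_U (k : ℕ) (τ a : Polynomial ℚ) :
    chat (k+1) τ a
      = (-τ - ((k : Polynomial ℚ) + 1)) * chat k τ (a+1) + (a+1) * chat k τ (a+1+1) := by
  cases k with
  | zero =>
      simp only [chat_succ, chat_zero]
      ring
  | succ j =>
      have f1 := chat_succ (j+1) τ a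
      have s1 := chat_star j τ a
      have s2 := chat_star j τ (a+1)
      have f2 := chat_succ j τ (a+1)
      push_cast
      linear_combination f1 + τ*s1 - (a+1)*s2 + ((j : Polynomial ℚ)+1)*f2

lemma chat_base (n : ℕ) (τ : Polynomial ℚ) : chat n τ 0 = (-τ)^n := by
  induction n with
  | zero => simp [chat_zero]
  | succ k ih => rw [chat_succ, ih]; ring

section Mv
open MvPolynomial

abbrev R4 := MvPolynomial (Fin 4) ℚ

variable (D : Derivation ℚ R4 R4)

lemma hDC (c : ℚ) : D (C c) = 0 := by
  rw [← MvPolynomial.algebraMap_eq]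
  exact Derivation.map_algebraMap D c

lemma DCmul (c : ℚ) (p : R4) : D (C c * p) = C c * D p := by
  rw [Derivation.leibniz, hDC, smul_eq_mul, smul_eq_mul, mul_zero, add_zero]

lemma iter_add (n : ℕ) (p q : R4) :
    (⇑D)^[n] (p + q) = (⇑D)^[n] p + (⇑D)^[n] q := by
  induction n generalizing p q with
  | zero => simp
  | succ m ih => simp [Function.iterate_succ_apply, map_add, ih]

lemma iter_Cmul (n : ℕ) (c : ℚ) (p : R4) :
    (⇑D)^[n] (C c * p) = C c * (⇑D)^[n] p := by
  induction n generalizing p with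
  | zero => simp
  | succ m ih => simp [Function.iterate_succ_apply, DCmul, ih]

lemma Dxpow (hDx : D (X 1) = X 1 * X 2 * X 3) (r : ℕ) :
    D ((X 1 : R4) ^ r) = C (r : ℚ) * (X 1 ^ r * X 2 * X 3) := by
  cases r with
  | zero => simp
  | succ m =>
      rw [Derivation.leibniz_pow, hDx, Nat.add_sub_cancel, smul_eq_mul, nsmul_eq_mul,
        ← map_natCast (MvPolynomial.C (σ := Fin 4) (R := ℚ)) (m+1)]
      push_cast
      ring

lemma Dypow (hDy : D (X 2) = (X 2) ^ 3 * X 3) (s : ℕ) :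
    D ((X 2 : R4) ^ s) = C (s : ℚ) * (X 2 ^ (s+2) * X 3) := by
  cases s with
  | zero => simp
  | succ m =>
      rw [Derivation.leibniz_pow, hDy, Nat.add_sub_cancel, smul_eq_mul, nsmul_eq_mul,
        ← map_natCast (MvPolynomial.C (σ := Fin 4) (R := ℚ)) (m+1)]
      push_cast
      ring

lemma Dwpow (hDw : D (X 3) = X 2 * (X 3) ^ 2) (t : ℕ) :
    D ((X 3 : R4) ^ t) = C (t : ℚ) * (X 2 * X 3 ^ (t+1)) := by
  cases t with
  | zero => simp
  | succ m =>
      rw [Derivation.leibniz_pow, hDw, Nat.add_sub_cancel, smul_eq_mul, nsmul_eq_mul,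
        ← map_natCast (MvPolynomial.C (σ := Fin 4) (R := ℚ)) (m+1)]
      push_cast
      ring

lemma Dmono (hDa : D (X 0) = X 0 * X 1 * X 2) (hDx : D (X 1) = X 1 * X 2 * X 3)
    (hDy : D (X 2) = (X 2) ^ 3 * X 3) (hDw : D (X 3) = X 2 * (X 3) ^ 2)
    (r s t : ℕ) :
    D (X 0 * X 1 ^ r * X 2 ^ s * X 3 ^ t)
      = X 0 * X 1 ^ (r+1) * X 2 ^ (s+1) * X 3 ^ t
        + C ((r : ℚ) + t) * (X 0 * X 1 ^ r * X 2 ^ (s+1) * X 3 ^ (t+1))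
        + C (s : ℚ) * (X 0 * X 1 ^ r * X 2 ^ (s+2) * X 3 ^ (t+1)) := by
  rw [Derivation.leibniz, Derivation.leibniz, Derivation.leibniz,
    hDa, Dxpow D hDx, Dypow D hDy, Dwpow D hDw]
  simp only [smul_eq_mul, map_add]
  ring

lemma keyA (hDa : D (X 0) = X 0 * X 1 * X 2) (hDx : D (X 1) = X 1 * X 2 * X 3)
    (hDy : D (X 2) = (X 2) ^ 3 * X 3) (hDw : D (X 3) = X 2 * (X 3) ^ 2)
    (φ : R4 →ₐ[ℚ] Polynomial ℚ)
    (hφa : φ (X 0) = 1) (hφx : φ (X 1) = Polynomial.X)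
    (hφy : φ (X 2) = 1) (hφw : φ (X 3) = 1) :
    ∀ (n r σ t : ℕ),
      φ ((⇑D)^[n] (X 0 * X 1 ^ r * X 2 ^ (σ+1) * X 3 ^ t))
        = Polynomial.X ^ r
            * chat n (-(Polynomial.X + Polynomial.C ((r : ℚ) + t + n)))
                (Polynomial.C (σ : ℚ)) := by
  have hφC : ∀ c : ℚ, φ (C c) = Polynomial.C c := by
    intro c
    rw [← MvPolynomial.algebraMap_eq, AlgHom.commutes]
    rfl
  intro n
  induction n with
  | zero =>
      intro r σ t
      simp [map_mul, map_pow, hφa, hφx, hφy, hφw, chat_zero]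
  | succ n ih =>
      intro r σ t
      rw [Function.iterate_succ_apply, Dmono D hDa hDx hDy hDw r (σ+1) t,
        iter_add D, iter_add D, iter_Cmul D, iter_Cmul D,
        map_add, map_add, map_mul, map_mul, hφC, hφC,
        show σ+1+2 = σ+2+1 from rfl,
        ih (r+1) (σ+1) t, ih r (σ+1) (t+1), ih r (σ+2) (t+1)]
      have hU := chat_U n (-(Polynomial.X + Polynomial.C ((r : ℚ) + t + n + 1)))
        (Polynomial.C (σ : ℚ))
      push_cast at hU ⊢
      simp only [map_add, map_one, map_ofNat, Polynomial.C_eq_natCast] at hU ⊢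
      ring_nf at hU ⊢
      linear_combination (-Polynomial.X ^ r) * hU

end Mv

end PhiDnAux

open MvPolynomial in
theorem phi_dn_axry (D : Derivation ℚ (MvPolynomial (Fin 4) ℚ) (MvPolynomial (Fin 4) ℚ))
    (hDa : D (X 0) = X 0 * X 1 * X 2)
    (hDx : D (X 1) = X 1 * X 2 * X 3)
    (hDy : D (X 2) = (X 2) ^ 3 * X 3)
    (hDw : D (X 3) = X 2 * (X 3) ^ 2)
    (φ : MvPolynomial (Fin 4) ℚ →ₐ[ℚ] Polynomial ℚ)
    (hφa : φ (X 0) = 1) (hφx : φ (X 1) = Polynomial.X)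
    (hφy : φ (X 2) = 1) (hφw : φ (X 3) = 1)
    (n r : ℕ) (hn : 1 ≤ n) :
    φ ((⇑D)^[n] (X 0 * (X 1) ^ r * X 2))
      = Polynomial.X ^ r
          * (Polynomial.X + (r : Polynomial ℚ) + (n : Polynomial ℚ)) ^ n := by
  have h := keyA D hDa hDx hDy hDw φ hφa hφx hφy hφw n r 0 0
  rw [show (X 0 * X 1 ^ r * X 2 ^ (0+1) * X 3 ^ 0 : R4) = X 0 * X 1 ^ r * X 2 by
    ring] at h
  rw [h, Nat.cast_zero, Polynomial.C_0, chat_base, neg_neg]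
  push_cast
  simp only [map_add, Polynomial.C_eq_natCast, Polynomial.C_0]
  ring
end

section
/- (Abel-type identity, case (p,q) = (−2,−2)) For every integer n ≥ 3 and all real numbers x₁, x₂ with x₁ ≠ 0, x₂ ≠ 0, x₁ ≠ −1 and x₂ ≠ −1: ∑_{k=0}^{n} C(n,k) · x₁·x₂·(x₁+1)·(x₂+1) · (x₁+k)^{(k−2 : ℤ)} · (x₂+n−k)^{(n−k−2 : ℤ)} = ( (x₁+x₂)³ − 3n(x₁+x₂) − 2n ) · (x₁+x₂+n)^{n−3} + ( (x₁+x₂)² / (x₁·x₂) ) · (x₁+x₂+1) · (x₁+x₂+n)^{n−2}, where C(n,k) denotes the binomial coefficient and (·)^{(m : ℤ)} denotes the integer power (zpow) with exponent m ∈ ℤ (the exponents are negative only for k ∈ {0, 1, n−1, n}, where the corresponding bases x₁, x₁+1, x₂+1, x₂ are nonzero by hypothesis). -/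
/-!
With Riordan's Abel sums `A_n(x, y; p, q) = ∑ₖ C(n,k) (x+k)^(k+p) (y+n-k)^(n-k+q)`, the
left-hand side is `x y (x+1) (y+1) A_n(x, y; -2, -2)`. Pascal's rule
`A_{n+1}(x,y;p,q) = A_n(x,y+1;p,q+1) + A_n(x+1,y;p+1,q)`, the symmetry
`A_n(x,y;p,q) = A_n(y,x;q,p)` and the absorption rule
`A_{n+1}(x,y;p,q+1) = y A_{n+1}(x,y;p,q) + (n+1) A_n(x,y+1;p,q+1)` lead from Abel's identity
`x A_n(x,y;-1,0) = (x+y+n)^n` through `A(-1,-1)`, `A(-2,0)` and `A(-2,-1)` to a closed form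
of `A(-2,-2)`.

Absorption needs the bases `y + j` to be nonzero, so this proves the identity only for
`x, y ∉ -ℕ`. Along `(x₁ + t, x₂ + t)` both sides are continuous at `t = 0` (the only bases with
negative exponents are `x₁, x₁ + 1, x₂, x₂ + 1`) and the excluded `t` are countable, so the
identity passes to the limit.
-/

open Finset Filter Topology

noncomputable def abelSum (n : ℕ) (x y : ℝ) (p q : ℤ) : ℝ :=
  ∑ ij ∈ antidiagonal n,
    (n.choose ij.1 : ℝ) * ((x + ij.1) ^ ((ij.1 : ℤ) + p) * (y + ij.2) ^ ((ij.2 : ℤ) + q))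

theorem abelSum_succ (n : ℕ) (x y : ℝ) (p q : ℤ) :
    abelSum (n + 1) x y p q = abelSum n x (y + 1) p (q + 1) + abelSum n (x + 1) y (p + 1) q := by
  rw [abelSum, sum_antidiagonal_choose_succ_mul
    (fun i j => (x + i) ^ ((i : ℤ) + p) * (y + j) ^ ((j : ℤ) + q))]
  congr 1 <;> refine sum_congr rfl fun ij hij => ?_
  · push_cast; ring_nf
  · rw [Nat.choose_symm_of_eq_add (mem_antidiagonal.1 hij).symm]
    push_cast; ring_nf

theorem abelSum_comm (n : ℕ) (x y : ℝ) (p q : ℤ) : abelSum n x y p q = abelSum n y x q p := by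
  rw [abelSum, ← Nat.sum_antidiagonal_swap]
  refine sum_congr rfl fun ij hij => ?_
  rw [Prod.fst_swap, Prod.snd_swap, Nat.choose_symm_of_eq_add (mem_antidiagonal.1 hij).symm]
  ring

def NotNegNat (x : ℝ) : Prop := ∀ k : ℕ, x + k ≠ 0

theorem NotNegNat.ne_zero {x : ℝ} (hx : NotNegNat x) : x ≠ 0 := by
  simpa using hx 0

theorem NotNegNat.add_one {x : ℝ} (hx : NotNegNat x) : NotNegNat (x + 1) := fun k => by
  have := hx (k + 1)
  push_cast at this
  rwa [add_comm (k : ℝ), ← add_assoc] at this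

theorem abelSum_add_one_right (n : ℕ) (x : ℝ) {y : ℝ} (hy : NotNegNat y) (p q : ℤ) :
    abelSum (n + 1) x y p (q + 1)
      = y * abelSum (n + 1) x y p q + (n + 1) * abelSum n x (y + 1) p (q + 1) := by
  have hsplit : ∀ j : ℕ, (y + j) ^ ((j : ℤ) + (q + 1))
      = y * (y + j) ^ ((j : ℤ) + q) + j * (y + j) ^ ((j : ℤ) + q) := fun j => by
    rw [← add_assoc, zpow_add_one₀ (hy j)]
    ring
  have hchoose : ∀ i j : ℕ, i + j = n →
      ((n + 1).choose i : ℝ) * (j + 1 : ℕ) = (n + 1) * n.choose i := fun i j hij => by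
    have := Nat.choose_mul_succ_eq n i
    rw [show n + 1 - i = j + 1 by omega] at this
    exact_mod_cast this.symm.trans (mul_comm _ _)
  simp only [abelSum, hsplit, mul_add, sum_add_distrib, mul_sum]
  congr 1
  · exact sum_congr rfl fun _ _ => by ring
  · rw [Nat.sum_antidiagonal_succ']
    simp only [Nat.cast_zero, zero_mul, mul_zero, zero_add]
    refine sum_congr rfl fun ij hij => ?_
    obtain ⟨i, j⟩ := ij
    rw [show y + ((j + 1 : ℕ) : ℝ) = y + 1 + j by push_cast; ring,
      show ((j + 1 : ℕ) : ℤ) + q = j + (q + 1) by push_cast; ring]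
    linear_combination (x + i) ^ ((i : ℤ) + p) * (y + 1 + j) ^ ((j : ℤ) + (q + 1))
      * hchoose i j (mem_antidiagonal.1 hij)

theorem abelSum_add_one_left (n : ℕ) {x : ℝ} (hx : NotNegNat x) (y : ℝ) (p q : ℤ) :
    abelSum (n + 1) x y (p + 1) q
      = x * abelSum (n + 1) x y p q + (n + 1) * abelSum n (x + 1) y (p + 1) q := by
  rw [abelSum_comm, abelSum_add_one_right n y hx, abelSum_comm (n + 1), abelSum_comm n]

theorem mul_abelSum_neg_one_zero (n : ℕ) {x y : ℝ} (hx : NotNegNat x) (hy : NotNegNat y) :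
    x * abelSum n x y (-1) 0 = (x + y + n) ^ n := by
  induction n generalizing x y with
  | zero => simp [abelSum, hx.ne_zero]
  | succ n ih =>
    have habs := abelSum_add_one_right n x hy (-1) (-1)
    have hpas := abelSum_succ n x y (-1) (-1)
    rw [abelSum_comm n (x + 1)] at hpas
    norm_num only at habs hpas
    have h1 := ih hx hy.add_one
    have h2 := ih hy hx.add_one
    push_cast
    linear_combination x * habs + x * y * hpas + (y + n + 1) * h1 + x * h2

theorem mul_abelSum_neg_one_neg_one (n : ℕ) {x y : ℝ} (hx : NotNegNat x) (hy : NotNegNat y) :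
    x * y * abelSum (n + 1) x y (-1) (-1) = (x + y) * (x + y + n + 1) ^ n := by
  have hpas := abelSum_succ n x y (-1) (-1)
  rw [abelSum_comm n (x + 1)] at hpas
  norm_num only at hpas
  have h1 := mul_abelSum_neg_one_zero n hx hy.add_one
  have h2 := mul_abelSum_neg_one_zero n hy hx.add_one
  linear_combination (x * y) * hpas + y * h1 + x * h2

theorem mul_abelSum_neg_two_zero (n : ℕ) {x y : ℝ} (hx : NotNegNat x) (hy : NotNegNat y) :
    x ^ 2 * (x + 1) * abelSum (n + 1) x y (-2) 0
      = ((x + 1) * (x + y + n + 1) - (n + 1) * x) * (x + y + n + 1) ^ n := by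
  have habs := abelSum_add_one_left n hx y (-2) 0
  norm_num only at habs
  have h1 := mul_abelSum_neg_one_zero (n + 1) hx hy
  have h2 := mul_abelSum_neg_one_zero n hx.add_one hy
  push_cast at h1
  linear_combination (-(x * (x + 1))) * habs + (x + 1) * h1 - (n + 1) * x * h2

theorem mul_abelSum_neg_two_neg_one (n : ℕ) {x y : ℝ} (hx : NotNegNat x) (hy : NotNegNat y) :
    x ^ 2 * (x + 1) * y * abelSum (n + 2) x y (-2) (-1)
      = (y * (x + 1) * (x + y + n + 2) - (n + 1) * x * y + x ^ 2 * (x + y + 1))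
        * (x + y + n + 2) ^ n := by
  have hpas := abelSum_succ (n + 1) x y (-2) (-1)
  norm_num only at hpas
  have h1 := mul_abelSum_neg_two_zero n hx hy.add_one
  have h2 := mul_abelSum_neg_one_neg_one n hx.add_one hy
  linear_combination (x ^ 2 * (x + 1) * y) * hpas + y * h1 + x ^ 2 * h2

theorem mul_abelSum_neg_two_neg_two (n : ℕ) {x y : ℝ} (hx : NotNegNat x) (hy : NotNegNat y) :
    x ^ 2 * (x + 1) * y ^ 2 * (y + 1) * abelSum (n + 3) x y (-2) (-2)
      = x * y * ((x + y) ^ 3 - 3 * (n + 3) * (x + y) - 2 * (n + 3)) * (x + y + n + 3) ^ n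
        + (x + y) ^ 2 * (x + y + 1) * (x + y + n + 3) ^ (n + 1) := by
  have hpas := abelSum_succ (n + 2) x y (-2) (-2)
  rw [abelSum_comm (n + 2) (x + 1)] at hpas
  norm_num only at hpas
  have h1 := mul_abelSum_neg_two_neg_one n hx hy.add_one
  have h2 := mul_abelSum_neg_two_neg_one n hy hx.add_one
  linear_combination (x ^ 2 * (x + 1) * y ^ 2 * (y + 1)) * hpas + y ^ 2 * h1 + x ^ 2 * h2

noncomputable def abelLHS (n : ℕ) (x y : ℝ) : ℝ :=
  ∑ k ∈ range (n + 1),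
    (n.choose k : ℝ) * (x * y * (x + 1) * (y + 1))
      * (x + k) ^ ((k : ℤ) - 2) * (y + n - k) ^ ((n : ℤ) - k - 2)

noncomputable def abelRHS (n : ℕ) (x y : ℝ) : ℝ :=
  ((x + y) ^ 3 - 3 * n * (x + y) - 2 * n) * (x + y + n) ^ (n - 3)
    + ((x + y) ^ 2 / (x * y)) * (x + y + 1) * (x + y + n) ^ (n - 2)

theorem abelLHS_eq_mul_abelSum (n : ℕ) (x y : ℝ) :
    abelLHS n x y = x * y * (x + 1) * (y + 1) * abelSum n x y (-2) (-2) := by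
  rw [abelSum, Nat.sum_antidiagonal_eq_sum_range_succ_mk, mul_sum]
  refine sum_congr rfl fun k hk => ?_
  have hkn : k ≤ n := Nat.lt_succ_iff.1 (mem_range.1 hk)
  push_cast [Nat.cast_sub hkn]
  ring_nf

theorem abelLHS_eq_abelRHS {n : ℕ} (hn : 3 ≤ n) {x y : ℝ} (hx : NotNegNat x) (hy : NotNegNat y) :
    abelLHS n x y = abelRHS n x y := by
  obtain ⟨m, rfl⟩ := Nat.exists_eq_add_of_le' hn
  have h := mul_abelSum_neg_two_neg_two m hx hy
  rw [abelLHS_eq_mul_abelSum, abelRHS, Nat.add_sub_cancel, show m + 3 - 2 = m + 1 by omega]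
  have hx₀ := hx.ne_zero
  have hy₀ := hy.ne_zero
  field_simp
  push_cast
  linear_combination h

theorem eq_of_continuousAt_of_eqOn_dense {X Y : Type*} [TopologicalSpace X] [TopologicalSpace Y]
    [T2Space Y] {f g : X → Y} {s : Set X} {a : X} (hs : Dense s) (hf : ContinuousAt f a)
    (hg : ContinuousAt g a) (hfg : Set.EqOn f g s) : f a = g a :=
  haveI := mem_closure_iff_nhdsWithin_neBot.1 (hs a)
  tendsto_nhds_unique_of_eventuallyEq (hf.mono_left nhdsWithin_le_nhds)
    (hg.mono_left nhdsWithin_le_nhds) (hfg.eventuallyEq_of_mem self_mem_nhdsWithin)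

theorem countable_setOf_not_notNegNat_add (x : ℝ) : {t : ℝ | ¬NotNegNat (x + t)}.Countable := by
  refine (Set.countable_range fun k : ℕ => -x - k).mono fun t ht => ?_
  obtain ⟨k, hk⟩ : ∃ k : ℕ, x + t + k = 0 := by simpa [NotNegNat] using ht
  exact ⟨k, by linarith⟩

theorem eq_of_forall_notNegNat {F G : ℝ → ℝ → ℝ} {x y : ℝ}
    (hF : ContinuousAt (fun t => F (x + t) (y + t)) 0)
    (hG : ContinuousAt (fun t => G (x + t) (y + t)) 0)
    (hFG : ∀ a b, NotNegNat a → NotNegNat b → F a b = G a b) : F x y = G x y := by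
  have hdense : Dense {t | NotNegNat (x + t) ∧ NotNegNat (y + t)} := by
    have hcount := (countable_setOf_not_notNegNat_add x).union (countable_setOf_not_notNegNat_add y)
    simpa only [Set.compl_union, Set.compl_ofPred, not_not, Set.ofPred_and] using
      hcount.dense_compl ℝ
  simpa using eq_of_continuousAt_of_eqOn_dense hdense hF hG fun t ht => hFG _ _ ht.1 ht.2

theorem continuousAt_add_natCast_zpow_sub_two {a : ℝ} (h₀ : a ≠ 0) (h₁ : a + 1 ≠ 0) (k : ℕ) :
    ContinuousAt (fun t : ℝ => (a + t + k) ^ ((k : ℤ) - 2)) 0 := by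
  refine ContinuousAt.zpow₀ (by fun_prop) _ ?_
  rcases k with _ | _ | k
  · simp [h₀]
  · simp [h₁]
  · right; omega

theorem continuousAt_abelLHS (n : ℕ) {x y : ℝ} (hx₀ : x ≠ 0) (hx₁ : x + 1 ≠ 0) (hy₀ : y ≠ 0)
    (hy₁ : y + 1 ≠ 0) : ContinuousAt (fun t => abelLHS n (x + t) (y + t)) 0 := by
  unfold abelLHS
  refine tendsto_finsetSum _ fun k hk => ?_
  change ContinuousAt _ 0
  obtain ⟨j, rfl⟩ : ∃ j, n = k + j := Nat.exists_eq_add_of_le (Nat.lt_succ_iff.1 (mem_range.1 hk))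
  have hxk := continuousAt_add_natCast_zpow_sub_two hx₀ hx₁ k
  have hyj := continuousAt_add_natCast_zpow_sub_two hy₀ hy₁ j
  have hj : ∀ t, (y + t + ((k + j : ℕ) : ℝ) - k) ^ (((k + j : ℕ) : ℤ) - k - 2)
      = (y + t + j) ^ ((j : ℤ) - 2) := fun t => by push_cast; ring_nf
  simp only [hj]
  fun_prop

theorem continuousAt_abelRHS (n : ℕ) {x y : ℝ} (hx : x ≠ 0) (hy : y ≠ 0) :
    ContinuousAt (fun t => abelRHS n (x + t) (y + t)) 0 := by
  unfold abelRHS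
  fun_prop (disch := simpa using mul_ne_zero hx hy)

theorem abel_identity_m2_m2 (n : ℕ) (hn : 3 ≤ n) (x₁ x₂ : ℝ)
    (h10 : x₁ ≠ 0) (h20 : x₂ ≠ 0) (h11 : x₁ ≠ -1) (h21 : x₂ ≠ -1) :
    ∑ k ∈ Finset.range (n + 1),
        (n.choose k : ℝ) * (x₁ * x₂ * (x₁ + 1) * (x₂ + 1))
          * (x₁ + k) ^ ((k : ℤ) - 2) * (x₂ + n - k) ^ ((n : ℤ) - k - 2)
      = ((x₁ + x₂) ^ 3 - 3 * n * (x₁ + x₂) - 2 * n) * (x₁ + x₂ + n) ^ (n - 3)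
        + ((x₁ + x₂) ^ 2 / (x₁ * x₂)) * (x₁ + x₂ + 1) * (x₁ + x₂ + n) ^ (n - 2) := by
  have h11' : x₁ + 1 ≠ 0 := fun h => h11 (eq_neg_of_add_eq_zero_left h)
  have h21' : x₂ + 1 ≠ 0 := fun h => h21 (eq_neg_of_add_eq_zero_left h)
  exact eq_of_forall_notNegNat (F := abelLHS n) (G := abelRHS n)
    (continuousAt_abelLHS n h10 h11' h20 h21') (continuousAt_abelRHS n h10 h20)
    fun _ _ => abelLHS_eq_abelRHS hn
end
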